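/- Let (μ^t, R^t) and (μ̄^t, R̄^t) be two equivalent 1-parameter formal deformations of a Rota-Baxter family BiHom-Ω-associative algebra (A, μ, R, p, q) of weight λ, via a formal isomorphism ψ^t_ω = Σ ψ^i_ω t^i with ψ⁰ = id. Then their infinitesimals satisfy μ̄¹_{α,β} − μ¹_{α,β} = δ¹_Alg(ψ¹)_{α,β} and R̄¹_ω − R¹_ω = −Φ¹(ψ¹)_ω; hence the infinitesimals define the same cohomology class in H²_{RBFA_λ}(A). -/

import Mathlib

/-! Compare the coefficients of `t¹` in `ψ^t ∘ ν^t = μ^t ∘ (ψ^t ⊗ ψ^t)` and `ψ^t ∘ S^t = R^t ∘ ψ^t`.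
Since `ψ⁰ = id`, `ν⁰ = μ⁰ = mul` and `S⁰ = R⁰ = R`, they read
`ν¹ + ψ¹ ∘ mul = mul (id ⊗ ψ¹) + mul (ψ¹ ⊗ id) + μ¹` and `S¹ + ψ¹ ∘ R = R ∘ ψ¹ + R¹`. -/

open scoped BigOperators

section

variable {k Ω A : Type*} [CommRing k] [Monoid Ω] [AddCommGroup A] [Module k A]

/-- A 1-parameter formal deformation of a Rota-Baxter family
BiHom-`Ω`-associative algebra `(A, mul, R, p, q)` of weight `λ`, given by the coefficients
`μi n`, `Ri n` of `tⁿ` in `μ^t`, `R^t`. -/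
def IsFormalDeformation (lam : k)
    (mul : Ω → Ω → A →ₗ[k] A →ₗ[k] A) (R p q : Ω → A →ₗ[k] A)
    (μi : ℕ → Ω → Ω → A →ₗ[k] A →ₗ[k] A) (Ri : ℕ → Ω → A →ₗ[k] A) : Prop :=
  μi 0 = mul ∧ Ri 0 = R ∧
  (∀ i α β x y, p (α * β) (μi i α β x y) = μi i α β (p α x) (p β y)) ∧
  (∀ i α β x y, q (α * β) (μi i α β x y) = μi i α β (q α x) (q β y)) ∧
  (∀ i ω x, p ω (Ri i ω x) = Ri i ω (p ω x)) ∧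
  (∀ i ω x, q ω (Ri i ω x) = Ri i ω (q ω x)) ∧
  (∀ (n : ℕ) (α β γ : Ω) (x y z : A),
    ∑ ij ∈ Finset.HasAntidiagonal.antidiagonal n, μi ij.1 (α * β) γ (μi ij.2 α β x y) (q γ z)
      = ∑ ij ∈ Finset.HasAntidiagonal.antidiagonal n, μi ij.1 α (β * γ) (p α x) (μi ij.2 β γ y z)) ∧
  (∀ (n : ℕ) (α β : Ω) (x y : A),
    ∑ ij ∈ Finset.HasAntidiagonal.antidiagonal n, ∑ kl ∈ Finset.HasAntidiagonal.antidiagonal ij.2,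
        μi ij.1 α β (Ri kl.1 α x) (Ri kl.2 β y)
      = (∑ ij ∈ Finset.HasAntidiagonal.antidiagonal n, ∑ kl ∈ Finset.HasAntidiagonal.antidiagonal ij.2,
          Ri ij.1 (α * β) (μi kl.1 α β x (Ri kl.2 β y)))
        + (∑ ij ∈ Finset.HasAntidiagonal.antidiagonal n, ∑ kl ∈ Finset.HasAntidiagonal.antidiagonal ij.2,
            Ri ij.1 (α * β) (μi kl.1 α β (Ri kl.2 α x) y))
        + lam • ∑ ij ∈ Finset.HasAntidiagonal.antidiagonal n, Ri ij.1 (α * β) (μi ij.2 α β x y))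

theorem Finset.Nat.sum_antidiagonal_one {M : Type*} [AddCommMonoid M] (f : ℕ × ℕ → M) :
    ∑ ij ∈ Finset.HasAntidiagonal.antidiagonal 1, f ij = f (0, 1) + f (1, 0) := by
  simp [Finset.Nat.sum_antidiagonal_succ]

/-- The algebra part `δ¹_Alg` of the differential on 1-cochains. -/
def algDifferential (mul : Ω → Ω → A →ₗ[k] A →ₗ[k] A) (η : Ω → A →ₗ[k] A)
    (α β : Ω) (a b : A) : A :=
  mul α β a (η β b) + mul α β (η α a) b - η (α * β) (mul α β a b)

theorem infinitesimal_mul_sub_eq_algDifferential {mul : Ω → Ω → A →ₗ[k] A →ₗ[k] A}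
    {μi νi : ℕ → Ω → Ω → A →ₗ[k] A →ₗ[k] A} {ψi : ℕ → Ω → A →ₗ[k] A}
    (hμ0 : μi 0 = mul) (hν0 : νi 0 = mul) (hψ0 : ψi 0 = fun _ => LinearMap.id) (α β : Ω) (a b : A)
    (hmul : ∑ ij ∈ Finset.HasAntidiagonal.antidiagonal 1, ψi ij.1 (α * β) (νi ij.2 α β a b)
        = ∑ ij ∈ Finset.HasAntidiagonal.antidiagonal 1, ∑ kl ∈ Finset.HasAntidiagonal.antidiagonal ij.2,
            μi ij.1 α β (ψi kl.1 α a) (ψi kl.2 β b)) :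
    νi 1 α β a b - μi 1 α β a b = algDifferential mul (ψi 1) α β a b := by
  rw [algDifferential, sub_eq_sub_iff_add_eq_add]
  simpa only [Finset.Nat.sum_antidiagonal_one, Finset.Nat.antidiagonal_zero, Finset.sum_singleton,
    hψ0, hμ0, hν0, LinearMap.id_coe, id_eq] using hmul

/-- `⁅ψ 1, R⁆ = ψ¹ ∘ R − R ∘ ψ¹` is the component `Φ¹(ψ¹)_ω` at a fixed `ω`. -/
theorem infinitesimal_sub_eq_neg_lie {R : Module.End k A} {Ri Si ψ : ℕ → Module.End k A}
    (hR0 : Ri 0 = R) (hS0 : Si 0 = R) (hψ0 : ψ 0 = LinearMap.id)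
    (h : ∀ a, ∑ ij ∈ Finset.HasAntidiagonal.antidiagonal 1, ψ ij.1 (Si ij.2 a)
        = ∑ ij ∈ Finset.HasAntidiagonal.antidiagonal 1, Ri ij.1 (ψ ij.2 a)) :
    Si 1 - Ri 1 = -⁅ψ 1, R⁆ := by
  ext a
  rw [LieRing.of_associative_ring_bracket, neg_sub, LinearMap.sub_apply, LinearMap.sub_apply,
    Module.End.mul_apply, Module.End.mul_apply, sub_eq_sub_iff_add_eq_add]
  simpa only [Finset.Nat.sum_antidiagonal_one, hψ0, hR0, hS0, LinearMap.id_coe, id_eq] using h a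

theorem equivalent_deformations_infinitesimals_general (lam : k)
    (mul : Ω → Ω → A →ₗ[k] A →ₗ[k] A) (R p q : Ω → A →ₗ[k] A)
    (μi νi : ℕ → Ω → Ω → A →ₗ[k] A →ₗ[k] A) (Ri Si : ℕ → Ω → A →ₗ[k] A)
    (hμ : IsFormalDeformation lam mul R p q μi Ri)
    (hν : IsFormalDeformation lam mul R p q νi Si)
    -- the formal isomorphism `ψ^t = Σ ψ^i t^i`, `ψ⁰ = id`
    (ψi : ℕ → Ω → A →ₗ[k] A)
    (hψ0 : ψi 0 = fun _ => LinearMap.id)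
    -- `ψ^t ∘ ν^t = μ^t ∘ (ψ^t ⊗ ψ^t)` coefficientwise
    (hmul : ∀ (n : ℕ) (α β : Ω) (x y : A),
      ∑ ij ∈ Finset.HasAntidiagonal.antidiagonal n, ψi ij.1 (α * β) (νi ij.2 α β x y)
        = ∑ ij ∈ Finset.HasAntidiagonal.antidiagonal n, ∑ kl ∈ Finset.HasAntidiagonal.antidiagonal ij.2,
            μi ij.1 α β (ψi kl.1 α x) (ψi kl.2 β y))
    -- `ψ^t ∘ S^t = R^t ∘ ψ^t` coefficientwise
    (hR : ∀ (n : ℕ) (ω : Ω) (x : A),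
      ∑ ij ∈ Finset.HasAntidiagonal.antidiagonal n, ψi ij.1 ω (Si ij.2 ω x)
        = ∑ ij ∈ Finset.HasAntidiagonal.antidiagonal n, Ri ij.1 ω (ψi ij.2 ω x)) :
    (∀ (α β : Ω) (a b : A),
      νi 1 α β a b - μi 1 α β a b
        = mul α β a (ψi 1 β b) + mul α β (ψi 1 α a) b
          - ψi 1 (α * β) (mul α β a b)) ∧
    (∀ (ω : Ω) (a : A),
      Si 1 ω a - Ri 1 ω a = -(ψi 1 ω (R ω a) - R ω (ψi 1 ω a))) :=
  ⟨fun α β a b => infinitesimal_mul_sub_eq_algDifferential hμ.1 hν.1 hψ0 α β a b (hmul 1 α β a b),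
    fun ω a => by
      simpa only [LieRing.of_associative_ring_bracket, LinearMap.sub_apply, LinearMap.neg_apply,
        Module.End.mul_apply] using LinearMap.congr_fun
        (infinitesimal_sub_eq_neg_lie (Ri := (Ri · ω)) (Si := (Si · ω)) (ψ := (ψi · ω))
          (congrFun hμ.2.1 ω) (congrFun hν.2.1 ω) (congrFun hψ0 ω)
          (hR 1 ω)) a⟩

/-- If two 1-parameter formal deformations `(μ, R)` and
`(ν, S)` of a Rota-Baxter family BiHom-`Ω`-associative algebra are equivalent via
a formal isomorphism `ψ^t` with `ψ⁰ = id`, then their infinitesimals satisfy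
`ν¹ − μ¹ = δ¹_Alg(ψ¹)` and `S¹ − R¹ = −Φ¹(ψ¹)`; in particular they define the
same cohomology class. -/
theorem equivalent_deformations_infinitesimals (lam : k)
    (mul : Ω → Ω → A →ₗ[k] A →ₗ[k] A) (R p q : Ω → A →ₗ[k] A)
    (μi νi : ℕ → Ω → Ω → A →ₗ[k] A →ₗ[k] A) (Ri Si : ℕ → Ω → A →ₗ[k] A)
    (hμ : IsFormalDeformation lam mul R p q μi Ri)
    (hν : IsFormalDeformation lam mul R p q νi Si)
    -- the formal isomorphism `ψ^t = Σ ψ^i t^i`, `ψ⁰ = id`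
    (ψi : ℕ → Ω → A →ₗ[k] A)
    (hψ0 : ψi 0 = fun _ => LinearMap.id)
    (hψp : ∀ i ω x, ψi i ω (p ω x) = p ω (ψi i ω x))
    (hψq : ∀ i ω x, ψi i ω (q ω x) = q ω (ψi i ω x))
    -- `ψ^t ∘ ν^t = μ^t ∘ (ψ^t ⊗ ψ^t)` coefficientwise
    (hmul : ∀ (n : ℕ) (α β : Ω) (x y : A),
      ∑ ij ∈ Finset.HasAntidiagonal.antidiagonal n, ψi ij.1 (α * β) (νi ij.2 α β x y)
        = ∑ ij ∈ Finset.HasAntidiagonal.antidiagonal n, ∑ kl ∈ Finset.HasAntidiagonal.antidiagonal ij.2,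
            μi ij.1 α β (ψi kl.1 α x) (ψi kl.2 β y))
    -- `ψ^t ∘ S^t = R^t ∘ ψ^t` coefficientwise
    (hR : ∀ (n : ℕ) (ω : Ω) (x : A),
      ∑ ij ∈ Finset.HasAntidiagonal.antidiagonal n, ψi ij.1 ω (Si ij.2 ω x)
        = ∑ ij ∈ Finset.HasAntidiagonal.antidiagonal n, Ri ij.1 ω (ψi ij.2 ω x)) :
    (∀ (α β : Ω) (a b : A),
      νi 1 α β a b - μi 1 α β a b
        = mul α β a (ψi 1 β b) + mul α β (ψi 1 α a) b
          - ψi 1 (α * β) (mul α β a b)) ∧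
    (∀ (ω : Ω) (a : A),
      Si 1 ω a - Ri 1 ω a = -(ψi 1 ω (R ω a) - R ω (ψi 1 ω a))) :=
  equivalent_deformations_infinitesimals_general lam mul R p q μi νi Ri Si hμ hν ψi hψ0 hmul hR

end
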